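/- For any backward trie T_b with n ≥ 3 nodes, the CDAWG of T_b has at most 2n − 3 nodes and at most 2n − 4 edges, independently of the alphabet size. -/

import Mathlib

/-- A rooted labeled tree on `n` nodes: node `0` is the root, every non-root
node `v` has a parent with smaller index, and `label v` is the character on
the edge between `v` and its parent. -/
structure LTree (n : ℕ) (A : Type*) where
  parent : Fin n → Fin n
  label : Fin n → A
  hp : ∀ v : Fin n, v.val ≠ 0 → (parent v).val < v.val

namespace LTree

variable {n : ℕ} {A : Type*}

/-- The string spelled by the path from node `v` up to the root
(read in the leaf-to-root direction). -/
def strUp (T : LTree n A) (v : Fin n) : List A :=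
  if h : v.val = 0 then []
  else T.label v :: T.strUp (T.parent v)
termination_by v.val
decreasing_by exact T.hp v h

/-- Substrings of the backward trie: strings spelled by upward paths from a
node to one of its ancestors (prefixes of the upward root-paths). -/
def SubstrU (T : LTree n A) : Set (List A) :=
  { s | ∃ (v : Fin n) (m : ℕ), s = (T.strUp v).take m }

/-- Substrings of the forward trie: strings spelled by downward paths from a
node to one of its descendants. -/
def SubstrD (T : LTree n A) : Set (List A) :=
  { s | ∃ (v : Fin n) (m : ℕ), s = ((T.strUp v).take m).reverse }

/-- A node is a leaf if no (non-root) node has it as parent. -/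
def isLeaf (T : LTree n A) (v : Fin n) : Prop :=
  ∀ u : Fin n, u.val ≠ 0 → T.parent u ≠ v

/-- Suffixes of the forward trie: strings spelled by downward paths from any
node to a leaf below it. -/
def SuffixF (T : LTree n A) : Set (List A) :=
  { s | ∃ v : Fin n, T.isLeaf v ∧ ∃ m : ℕ, s = ((T.strUp v).take m).reverse }

/-- Suffixes of the backward trie: strings spelled by the paths from any
non-root node up to the root. -/
def SuffixB (T : LTree n A) : Set (List A) :=
  { s | ∃ v : Fin n, v.val ≠ 0 ∧ s = T.strUp v }

/-- The trie condition: out-going edges of each node (equivalently, edges to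
the children of each node) carry mutually distinct characters. -/
def isTrie (T : LTree n A) : Prop :=
  ∀ u v : Fin n, u.val ≠ 0 → v.val ≠ 0 →
    T.parent u = T.parent v → T.label u = T.label v → u = v

/-- `X` is right-maximal on the forward trie: it has two distinct right
extensions, or an occurrence ending at a leaf. -/
def rightMaximalF (T : LTree n A) (X : List A) : Prop :=
  (∃ a b : A, a ≠ b ∧ X ++ [a] ∈ T.SubstrD ∧ X ++ [b] ∈ T.SubstrD) ∨
  (∃ v : Fin n, T.isLeaf v ∧ ∃ m : ℕ, X = ((T.strUp v).take m).reverse)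

/-- `X` is left-maximal on the forward trie: it has two distinct left
extensions, or an occurrence beginning at the root. -/
def leftMaximalF (T : LTree n A) (X : List A) : Prop :=
  (∃ a b : A, a ≠ b ∧ (a :: X) ∈ T.SubstrD ∧ (b :: X) ∈ T.SubstrD) ∨
  (∃ v : Fin n, X = (T.strUp v).reverse)

/-- `Y` is left-maximal on the backward trie: two distinct left extensions,
or an occurrence beginning at a leaf. -/
def leftMaximalB (T : LTree n A) (Y : List A) : Prop :=
  (∃ a b : A, a ≠ b ∧ (a :: Y) ∈ T.SubstrU ∧ (b :: Y) ∈ T.SubstrU) ∨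
  (∃ v : Fin n, T.isLeaf v ∧ ∃ m : ℕ, Y = (T.strUp v).take m)

/-- `Y` is right-maximal on the backward trie: two distinct right extensions,
or an occurrence ending at the root. -/
def rightMaximalB (T : LTree n A) (Y : List A) : Prop :=
  (∃ a b : A, a ≠ b ∧ Y ++ [a] ∈ T.SubstrU ∧ Y ++ [b] ∈ T.SubstrU) ∨
  (∃ v : Fin n, Y = T.strUp v)

end LTree

/-!
Every CDAWG node is a right-maximal substring of `T_b`, and the right-maximal substrings are
the nodes of the compacted trie of the prefix-closed set `Substr(T_b)`: the root paths
`strUp v` (at most `n` of them, one empty) together with the branching substrings. In a finite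
prefix-closed set of words there are fewer branching words than maximal ones, and when the empty
word branches every maximal word is a nonempty root path; this gives at most `2n - 3`
right-maximal substrings. If the empty word does not branch, a single letter occurs and there
are at most `n ≤ 2n - 3` substrings altogether. Sending an edge `(Y, a)` to the shortest
right-maximal word extending `Y ++ [a]` injects the edges into the nonempty right-maximal words.
-/

section PrefixClosed

open Finset

variable {α : Type*}

def IsPrefixClosed (P : Set (List α)) : Prop :=
  ∀ Y ∈ P, ∀ Z, Z <+: Y → Z ∈ P

def IsBranching (P : Set (List α)) (Y : List α) : Prop :=
  ∃ a b, a ≠ b ∧ Y ++ [a] ∈ P ∧ Y ++ [b] ∈ P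

/-- Edges of the compacted trie whose nodes are `R`: an edge leaves the node `Y`
and is determined by its first letter `a`. -/
def compactedEdges (R : Set (List α)) : Set (List α × α) :=
  {p | p.1 ∈ R ∧ ∃ Z ∈ R, p.1 ++ [p.2] <+: Z}

/-- Every nonempty word hangs below its `dropLast`; counting these edges node by node, a word
with a child contributes at least one and a branching word at least two. -/
theorem ncard_branching_add_one_le_ncard_maximal {P : Set (List α)} (hfin : P.Finite)
    (hpre : IsPrefixClosed P) (hnil : [] ∈ P) :
    {Y ∈ P | IsBranching P Y}.ncard + 1 ≤ {Y ∈ P | ∀ a, Y ++ [a] ∉ P}.ncard := by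
  classical
  set F := hfin.toFinset
  have hF : ∀ Y, Y ∈ F ↔ Y ∈ P := fun Y => hfin.mem_toFinset
  have ncard_eq : ∀ q : List α → Prop, {Y ∈ P | q Y}.ncard = #(F.filter q) := by
    intro q
    rw [← Set.ncard_coe_finset, coe_filter]
    simp only [hF]
  set children : List α → Finset (List α) := fun Y => (F.erase []).filter (·.dropLast = Y)
  have child_mem : ∀ Y a, Y ++ [a] ∈ P → Y ++ [a] ∈ children Y := by
    intro Y a ha
    simp [children, hF, ha]
  have card_edges : #F - 1 = ∑ Y ∈ F, #(children Y) := by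
    rw [← card_erase_of_mem ((hF _).2 hnil)]
    refine card_eq_sum_card_fiberwise fun Z hZ => (hF _).2 ?_
    exact hpre Z ((hF _).1 (mem_of_mem_erase hZ)) _ Z.dropLast_prefix
  have card_children : ∀ Y ∈ F, ((if ∃ a, Y ++ [a] ∈ P then 1 else 0) +
      if IsBranching P Y then 1 else 0) ≤ #(children Y) := by
    intro Y _
    by_cases hbr : IsBranching P Y
    · obtain ⟨a, b, hab, ha, hb⟩ := hbr
      rw [if_pos ⟨a, ha⟩, if_pos ⟨a, b, hab, ha, hb⟩]
      calc 1 + 1 = #{Y ++ [a], Y ++ [b]} := by simp [hab]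
        _ ≤ #(children Y) := card_le_card <| by
          simp only [insert_subset_iff, singleton_subset_iff]
          exact ⟨child_mem Y a ha, child_mem Y b hb⟩
    · rw [if_neg hbr, add_zero]
      split_ifs with hchild
      · obtain ⟨a, ha⟩ := hchild
        exact card_pos.2 ⟨_, child_mem Y a ha⟩
      · exact Nat.zero_le _
  have h_sum := sum_le_sum card_children
  rw [sum_add_distrib, sum_boole, sum_boole, ← card_edges] at h_sum
  have h_split := card_filter_add_card_filter_not (s := F) (fun Y => ∃ a, Y ++ [a] ∈ P)
  have hF_pos : 0 < #F := card_pos.2 ⟨[], (hF _).2 hnil⟩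
  simp only [not_exists] at h_split
  rw [ncard_eq fun Y => IsBranching P Y, ncard_eq fun Y => ∀ a, Y ++ [a] ∉ P]
  simp only [Nat.cast_id] at h_sum
  omega

theorem ncard_add_one_le_of_subset_compactedEdges {R : Set (List α)} {E : Set (List α × α)}
    (hR : R.Finite) (hnil : [] ∈ R) (hE : E ⊆ compactedEdges R) : E.ncard + 1 ≤ R.ncard := by
  have h_shortest : ∀ p ∈ E, ∃ Z ∈ R, p.1 ++ [p.2] <+: Z ∧
      ∀ Z' ∈ R, p.1 ++ [p.2] <+: Z' → Z.length ≤ Z'.length := by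
    intro p hp
    obtain ⟨-, Z₀, hZ₀, hpZ₀⟩ := hE hp
    obtain ⟨Z, ⟨hZ, hpZ⟩, hmin⟩ := Set.exists_min_image {Z ∈ R | p.1 ++ [p.2] <+: Z}
      List.length (hR.subset fun _ h => h.1) ⟨Z₀, hZ₀, hpZ₀⟩
    exact ⟨Z, hZ, hpZ, fun Z' hZ' h => hmin Z' ⟨hZ', h⟩⟩
  choose! f hfR hpf hmin using h_shortest
  -- no node of `R` lies strictly between `p.1` and `f p`
  have length_le : ∀ p ∈ E, ∀ q ∈ E, f p = f q → q.1.length ≤ p.1.length := by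
    intro p hp q hq hpq
    by_contra! hlt
    have hq_pre : q.1 ++ [q.2] <+: f p := hpq ▸ hpf q hq
    have h_between : p.1 ++ [p.2] <+: q.1 :=
      List.prefix_of_prefix_length_le (hpf p hp) ((List.prefix_append _ _).trans hq_pre)
        (by simpa using hlt)
    have h_short := hmin p hp q.1 (hE hq).1 h_between
    have h_long := hq_pre.length_le
    simp only [List.length_append, List.length_singleton] at h_long
    omega
  have h_inj : Set.InjOn f E := by
    intro p hp q hq hpq
    have hlen : p.1.length = q.1.length :=
      le_antisymm (length_le q hq p hp hpq.symm) (length_le p hp q hq hpq)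
    have h_eq : p.1 ++ [p.2] = q.1 ++ [q.2] :=
      (List.prefix_of_prefix_length_le (hpf p hp) (hpq ▸ hpf q hq) (by simp [hlen])).eq_of_length
        (by simp [hlen])
    obtain ⟨h1, h2⟩ := List.append_inj' h_eq rfl
    exact Prod.ext h1 (List.singleton_inj.1 h2)
  have h_maps : ∀ p ∈ E, f p ∈ R \ {[]} := by
    intro p hp
    refine ⟨hfR p hp, fun h_nil => ?_⟩
    have := (hpf p hp).length_le
    simp [Set.mem_singleton_iff.1 h_nil] at this
  have h_card := Set.ncard_le_ncard_of_injOn f h_maps h_inj hR.sdiff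
  have h_card_sdiff := Set.ncard_sdiff_singleton_add_one hnil hR
  omega

end PrefixClosed

theorem Set.ncard_range_le {ι β : Type*} [Finite ι] (f : ι → β) :
    (Set.range f).ncard ≤ Nat.card ι := by
  simpa [Nat.card_coe_set_eq] using Finite.card_range_le f

namespace LTree

variable {n : ℕ} {A : Type*} (T : LTree n A)

theorem strUp_of_val_eq_zero {v : Fin n} (h : v.val = 0) : T.strUp v = [] := by
  rw [strUp, dif_pos h]

theorem strUp_of_val_ne_zero {v : Fin n} (h : v.val ≠ 0) :
    T.strUp v = T.label v :: T.strUp (T.parent v) := by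
  rw [strUp, dif_neg h]

theorem length_strUp_le (v : Fin n) : (T.strUp v).length ≤ v.val := by
  by_cases h : v.val = 0
  · simp [T.strUp_of_val_eq_zero h]
  · have := length_strUp_le (T.parent v)
    have := T.hp v h
    rw [T.strUp_of_val_ne_zero h, List.length_cons]
    omega
termination_by v.val
decreasing_by exact T.hp v h

theorem exists_label_eq_of_mem_strUp {v : Fin n} {a : A} (ha : a ∈ T.strUp v) :
    ∃ u : Fin n, u.val ≠ 0 ∧ T.label u = a := by
  by_cases h : v.val = 0
  · simp [T.strUp_of_val_eq_zero h] at ha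
  · rw [T.strUp_of_val_ne_zero h, List.mem_cons] at ha
    rcases ha with rfl | ha
    · exact ⟨v, h, rfl⟩
    · exact exists_label_eq_of_mem_strUp ha
termination_by v.val
decreasing_by exact T.hp v h

theorem mem_substrU {Y : List A} : Y ∈ T.SubstrU ↔ ∃ v, Y <+: T.strUp v := by
  constructor
  · rintro ⟨v, m, rfl⟩
    exact ⟨v, List.take_prefix m _⟩
  · rintro ⟨v, hv⟩
    exact ⟨v, Y.length, List.prefix_iff_eq_take.1 hv⟩

theorem strUp_mem_substrU (v : Fin n) : T.strUp v ∈ T.SubstrU :=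
  T.mem_substrU.2 ⟨v, List.prefix_refl _⟩

theorem singleton_label_mem_substrU {u : Fin n} (hu : u.val ≠ 0) : [T.label u] ∈ T.SubstrU :=
  T.mem_substrU.2 ⟨u, by simp [T.strUp_of_val_ne_zero hu]⟩

theorem substrU_finite : T.SubstrU.Finite := by
  have : T.SubstrU = ⋃ v, {Y | Y ∈ (T.strUp v).inits} := by
    ext Y
    simp [mem_substrU]
  rw [this]
  exact Set.finite_iUnion fun v => List.finite_toSet _

theorem isPrefixClosed_substrU : IsPrefixClosed T.SubstrU := by
  intro Y hY Z hZ
  obtain ⟨v, hv⟩ := T.mem_substrU.1 hY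
  exact T.mem_substrU.2 ⟨v, hZ.trans hv⟩

theorem exists_eq_strUp_of_maximal {Y : List A} (hY : Y ∈ T.SubstrU)
    (hmax : ∀ a, Y ++ [a] ∉ T.SubstrU) : ∃ v, Y = T.strUp v := by
  obtain ⟨v, t, hvt⟩ := T.mem_substrU.1 hY
  refine ⟨v, ?_⟩
  cases t with
  | nil => simpa using hvt
  | cons a t => exact absurd (T.mem_substrU.2 ⟨v, ⟨t, by simp [← hvt]⟩⟩) (hmax a)

theorem nil_mem_range_strUp (hn : 0 < n) : [] ∈ Set.range T.strUp :=
  ⟨⟨0, hn⟩, T.strUp_of_val_eq_zero rfl⟩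

theorem nil_mem_substrU (hn : 0 < n) : [] ∈ T.SubstrU :=
  T.mem_substrU.2 ⟨⟨0, hn⟩, List.nil_prefix⟩

theorem label_eq_of_not_isBranching_nil (h : ¬IsBranching T.SubstrU []) {u v : Fin n}
    (hu : u.val ≠ 0) (hv : v.val ≠ 0) : T.label u = T.label v := by
  by_contra hne
  exact h ⟨_, _, hne, T.singleton_label_mem_substrU hu, T.singleton_label_mem_substrU hv⟩

theorem substrU_subset_range_replicate {a : A} (ha : ∀ u : Fin n, u.val ≠ 0 → T.label u = a) :
    T.SubstrU ⊆ Set.range fun k : Fin n => List.replicate k a := by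
  intro Y hY
  obtain ⟨v, hv⟩ := T.mem_substrU.1 hY
  refine ⟨⟨Y.length, (hv.length_le.trans (T.length_strUp_le v)).trans_lt v.isLt⟩, ?_⟩
  refine (List.eq_replicate_iff.2 ⟨rfl, fun b hb => ?_⟩).symm
  obtain ⟨u, hu, rfl⟩ := T.exists_label_eq_of_mem_strUp (hv.subset hb)
  exact ha u hu

theorem ncard_rightMaximalB_le_of_isBranching_nil (hn : 0 < n)
    (hroot : IsBranching T.SubstrU []) :
    {Y ∈ T.SubstrU | T.rightMaximalB Y}.ncard ≤ 2 * n - 3 := by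
  have h_range : (Set.range T.strUp).ncard ≤ n := (Set.ncard_range_le _).trans_eq (Nat.card_fin n)
  have h_nil := T.nil_mem_range_strUp hn
  have hB_nil : [] ∈ {Y ∈ T.SubstrU | IsBranching T.SubstrU Y} := ⟨T.nil_mem_substrU hn, hroot⟩
  have h_count := ncard_branching_add_one_le_ncard_maximal T.substrU_finite
    T.isPrefixClosed_substrU hB_nil.1
  set B := {Y ∈ T.SubstrU | IsBranching T.SubstrU Y}
  have h_nodes : {Y ∈ T.SubstrU | T.rightMaximalB Y} ⊆ Set.range T.strUp ∪ (B \ {[]}) := by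
    rintro Y ⟨hY, hbr | ⟨v, rfl⟩⟩
    · by_cases hY_nil : Y = []
      · exact Or.inl (hY_nil ▸ h_nil)
      · exact Or.inr ⟨⟨hY, hbr⟩, hY_nil⟩
    · exact Or.inl ⟨v, rfl⟩
  have h_leaves : {Y ∈ T.SubstrU | ∀ a, Y ++ [a] ∉ T.SubstrU} ⊆ Set.range T.strUp \ {[]} := by
    rintro Y ⟨hY, hmax⟩
    obtain ⟨v, rfl⟩ := T.exists_eq_strUp_of_maximal hY hmax
    refine ⟨⟨v, rfl⟩, fun h_eq => ?_⟩
    obtain ⟨a, -, -, ha, -⟩ := hroot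
    exact hmax a (by rwa [Set.mem_singleton_iff.1 h_eq])
  have hB_fin : B.Finite := T.substrU_finite.subset (Set.sep_subset _ _)
  have h_nodes_card := (Set.ncard_le_ncard h_nodes ((Set.finite_range _).union hB_fin.sdiff)).trans
    (Set.ncard_union_le _ _)
  have h_leaves_card := Set.ncard_le_ncard h_leaves (Set.finite_range _).sdiff
  have hB_card := Set.ncard_sdiff_singleton_add_one hB_nil hB_fin
  have h_range_card := Set.ncard_sdiff_singleton_add_one h_nil (Set.finite_range T.strUp)
  omega

theorem ncard_substrU_le_of_not_isBranching_nil (hn : 1 < n)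
    (hroot : ¬IsBranching T.SubstrU []) : T.SubstrU.ncard ≤ n := by
  have h_labels : ∀ u : Fin n, u.val ≠ 0 → T.label u = T.label ⟨1, hn⟩ :=
    fun u hu => T.label_eq_of_not_isBranching_nil hroot hu one_ne_zero
  calc T.SubstrU.ncard
      ≤ (Set.range fun k : Fin n => List.replicate k (T.label ⟨1, hn⟩)).ncard :=
        Set.ncard_le_ncard (T.substrU_subset_range_replicate h_labels) (Set.finite_range _)
    _ ≤ n := (Set.ncard_range_le _).trans_eq (Nat.card_fin n)

theorem ncard_rightMaximalB_le (hn : 3 ≤ n) :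
    {Y ∈ T.SubstrU | T.rightMaximalB Y}.ncard ≤ 2 * n - 3 := by
  by_cases hroot : IsBranching T.SubstrU []
  · exact T.ncard_rightMaximalB_le_of_isBranching_nil (by omega) hroot
  · calc {Y ∈ T.SubstrU | T.rightMaximalB Y}.ncard
        ≤ T.SubstrU.ncard := Set.ncard_le_ncard (Set.sep_subset _ _) T.substrU_finite
      _ ≤ n := T.ncard_substrU_le_of_not_isBranching_nil (by omega) hroot
      _ ≤ 2 * n - 3 := by omega

end LTree

/-- for any backward trie with `n ≥ 3` nodes, the CDAWG of `T_b`
has at most `2n - 3` nodes (the maximal substrings of `T_b`, i.e. the longest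
members of the equivalence classes) and at most `2n - 4` edges, independently
of the alphabet size. -/
theorem stmt13 {n : ℕ} {A : Type*} (T : LTree n A) (hn : 3 ≤ n) :
    {Y | Y ∈ T.SubstrU ∧ T.leftMaximalB Y ∧ T.rightMaximalB Y}.ncard ≤ 2 * n - 3 ∧
    {p : List A × A | p.1 ∈ T.SubstrU ∧ T.leftMaximalB p.1 ∧
        T.rightMaximalB p.1 ∧ p.1 ++ [p.2] ∈ T.SubstrU}.ncard ≤ 2 * n - 4 := by
  have hR_card := T.ncard_rightMaximalB_le hn
  have hR_fin : {Y ∈ T.SubstrU | T.rightMaximalB Y}.Finite :=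
    T.substrU_finite.subset (Set.sep_subset _ _)
  obtain ⟨v₀, hv₀⟩ := T.nil_mem_range_strUp (by omega)
  have hR_nil : [] ∈ {Y ∈ T.SubstrU | T.rightMaximalB Y} :=
    ⟨T.nil_mem_substrU (by omega), Or.inr ⟨v₀, hv₀.symm⟩⟩
  have h_edges : {p : List A × A | p.1 ∈ T.SubstrU ∧ T.leftMaximalB p.1 ∧
      T.rightMaximalB p.1 ∧ p.1 ++ [p.2] ∈ T.SubstrU} ⊆
      compactedEdges {Y ∈ T.SubstrU | T.rightMaximalB Y} := by
    rintro ⟨Y, a⟩ ⟨hY, -, hY_right, hYa⟩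
    obtain ⟨v, hv⟩ := T.mem_substrU.1 hYa
    exact ⟨⟨hY, hY_right⟩, T.strUp v, ⟨T.strUp_mem_substrU v, Or.inr ⟨v, rfl⟩⟩, hv⟩
  have h_edges_card := ncard_add_one_le_of_subset_compactedEdges hR_fin hR_nil h_edges
  refine ⟨(Set.ncard_le_ncard ?_ hR_fin).trans hR_card, by omega⟩
  exact fun Y hY => ⟨hY.1, hY.2.2⟩
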